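/- arXiv:1503.04546 — 5 statements merged into one kernel-verified Lean document; each statement's English description precedes it below -/
import Mathlib

section
/- Let λ ∈ ℝ and let v₀,…,v₈ be the D2Q9 velocities. For every α ∈ ℝ, every ũ = (ũˣ, ũʸ) ∈ ℝ² and every j ∈ {0,…,8}, the shifted third-order moment polynomial P₆(X,Y) = X(αX² + Y²) satisfies the identity α(vⱼˣ − ũˣ)³ + (vⱼˣ − ũˣ)(vⱼʸ − ũʸ)² = (vⱼˣ − ũˣ)(vⱼʸ − ũʸ)² + α( −3ũˣ(vⱼˣ − ũˣ)² + (λ² − 3(ũˣ)²)(vⱼˣ − ũˣ) + ũˣ(λ² − (ũˣ)²) ). -/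
/-- x-components of the D2Q9 velocities. -/
def vx (lam : ℝ) : Fin 9 → ℝ := ![0, lam, 0, -lam, 0, lam, -lam, -lam, lam]

/-- y-components of the D2Q9 velocities. -/
def vy (lam : ℝ) : Fin 9 → ℝ := ![0, 0, lam, 0, -lam, lam, lam, -lam, -lam]

/-!
Every D2Q9 abscissa `x ∈ {0, λ, -λ}` is a root of `X³ - λ²X`. Expanding `x = (x - u) + u` in
this relation expresses `(x - u)³` through lower powers of `x - u`; the `Y`-part of the moment
polynomial is untouched.
-/

lemma vx_pow_three (lam : ℝ) (j : Fin 9) : vx lam j ^ 3 = lam ^ 2 * vx lam j := by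
  fin_cases j <;> simp [vx] <;> ring

lemma sub_pow_three_of_pow_three_eq {R : Type*} [CommRing R] {x lam : R}
    (hx : x ^ 3 = lam ^ 2 * x) (u : R) :
    (x - u) ^ 3 = -3 * u * (x - u) ^ 2 + (lam ^ 2 - 3 * u ^ 2) * (x - u) + u * (lam ^ 2 - u ^ 2) := by
  linear_combination hx

/-- On the D2Q9 velocity set, the shifted moment polynomial `X (α X² + Y²)`
replaces its cubic part by a combination of lower-order shifted polynomials. -/
theorem stmt_0 (lam : ℝ) (α : ℝ) (ux uy : ℝ) (j : Fin 9) :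
    α * (vx lam j - ux) ^ 3 + (vx lam j - ux) * (vy lam j - uy) ^ 2 =
      (vx lam j - ux) * (vy lam j - uy) ^ 2 +
        α * (-3 * ux * (vx lam j - ux) ^ 2 + (lam ^ 2 - 3 * ux ^ 2) * (vx lam j - ux)
          + ux * (lam ^ 2 - ux ^ 2)) := by
  rw [sub_pow_three_of_pow_three_eq (vx_pow_three lam j) ux]
  ring
end

section
/- Let λ ∈ ℝ with λ ≠ 0 and let v₀,…,v₈ be the D2Q9 velocities. For every α ∈ ℝ and every ũ = (ũˣ, ũʸ) ∈ ℝ², the 9×9 real moment matrix M with entries M_{kj} = Q_k(vⱼ − ũ), where (Q₀,…,Q₈) are the polynomials 1, X, Y, X²+Y², X²−Y², XY, XY²+α(X²+Y²), YX²+α(X²+Y²), X²Y², is invertible. -/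
/-- The moment polynomials `1, X, Y, X²+Y², X²−Y², XY, XY²+α(X²+Y²),
YX²+α(X²+Y²), X²Y²` evaluated at `(x, y)`. -/
def Q (α x y : ℝ) : Fin 9 → ℝ :=
  ![1, x, y, x ^ 2 + y ^ 2, x ^ 2 - y ^ 2, x * y,
    x * y ^ 2 + α * (x ^ 2 + y ^ 2), y * x ^ 2 + α * (x ^ 2 + y ^ 2),
    x ^ 2 * y ^ 2]

/-- The moment matrix `M_{kj} = Q_k(v_j − ũ)` of the relative velocity scheme. -/
def Mmat (lam α ux uy : ℝ) : Matrix (Fin 9) (Fin 9) ℝ :=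
  fun k j => Q α (vx lam j - ux) (vy lam j - uy) k

/-!
Expanding `Q_k(x - a, y - b)` in the homogeneous polynomials
`1, X, Y, X²+Y², X²−Y², XY, XY², X²Y, X²Y²` (that is, `Q` at `α = 0`) only produces terms of
lower degree besides the leading one, so the change of basis is lower unitriangular and
`M_ũ = L · M₀(λ)` with `det L = 1`. By homogeneity `M₀(λ) = diag(λ^deg Q_k) · M₀(1)`, and the
moment matrix of the unit lattice `{-1, 0, 1}²` has an explicit inverse.
-/

open Matrix

def momentDegree : Fin 9 → ℕ := ![0, 1, 1, 2, 2, 2, 3, 3, 4]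

lemma Q_zero_mul (t x y : ℝ) (k : Fin 9) :
    Q 0 (t * x) (t * y) k = t ^ momentDegree k * Q 0 x y k := by
  fin_cases k <;> simp [Q, momentDegree] <;> ring

noncomputable def shiftMatrix (α a b : ℝ) : Matrix (Fin 9) (Fin 9) ℝ := !![
  1, 0, 0, 0, 0, 0, 0, 0, 0;
  -a, 1, 0, 0, 0, 0, 0, 0, 0;
  -b, 0, 1, 0, 0, 0, 0, 0, 0;
  a^2 + b^2, -2*a, -2*b, 1, 0, 0, 0, 0, 0;
  a^2 - b^2, -2*a, 2*b, 0, 1, 0, 0, 0, 0;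
  a*b, -b, -a, 0, 0, 1, 0, 0, 0;
  α*(a^2 + b^2) - a*b^2, b^2 - 2*a*α, 2*a*b - 2*b*α, α - a/2, a/2, -2*b, 1, 0, 0;
  α*(a^2 + b^2) - a^2*b, 2*a*b - 2*a*α, a^2 - 2*b*α, α - b/2, -b/2, -2*a, 0, 1, 0;
  a^2*b^2, -2*a*b^2, -2*a^2*b, (a^2 + b^2)/2, (b^2 - a^2)/2, 4*a*b, -2*a, -2*b, 1]

lemma Q_sub_eq_mulVec (α x y a b : ℝ) :
    Q α (x - a) (y - b) = shiftMatrix α a b *ᵥ Q 0 x y := by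
  ext k
  fin_cases k <;> simp [Q, shiftMatrix] <;> ring

lemma shiftMatrix_isLowerTriangular (α a b : ℝ) : (shiftMatrix α a b).IsLowerTriangular := by
  intro i j hij
  rw [OrderDual.toDual_lt_toDual] at hij
  fin_cases i <;> fin_cases j <;> simp [shiftMatrix] at hij ⊢

lemma det_shiftMatrix (α a b : ℝ) : (shiftMatrix α a b).det = 1 := by
  rw [det_of_isLowerTriangular _ (shiftMatrix_isLowerTriangular α a b)]
  simp [Fin.prod_univ_succ, shiftMatrix]

lemma Mmat_eq_shiftMatrix_mul (lam α ux uy : ℝ) :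
    Mmat lam α ux uy = shiftMatrix α ux uy * Mmat lam 0 0 0 := by
  ext k j
  simp only [Mmat, Q_sub_eq_mulVec α _ _ ux uy, sub_zero, mulVec, dotProduct, mul_apply]

lemma vx_eq_mul (lam : ℝ) (j : Fin 9) : vx lam j = lam * vx 1 j := by
  fin_cases j <;> simp [vx]

lemma vy_eq_mul (lam : ℝ) (j : Fin 9) : vy lam j = lam * vy 1 j := by
  fin_cases j <;> simp [vy]

lemma Mmat_zero_eq_diagonal_mul (lam : ℝ) :
    Mmat lam 0 0 0 = diagonal (fun k => lam ^ momentDegree k) * Mmat 1 0 0 0 := by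
  ext k j
  simp only [Mmat, sub_zero, vx_eq_mul lam j, vy_eq_mul lam j, Q_zero_mul, diagonal_mul]

noncomputable def MmatOneInv : Matrix (Fin 9) (Fin 9) ℝ := !![
  1, 0, 0, -1, 0, 0, 0, 0, 1;
  0, 1/2, 0, 1/4, 1/4, 0, -1/2, 0, -1/2;
  0, 0, 1/2, 1/4, -1/4, 0, 0, -1/2, -1/2;
  0, -1/2, 0, 1/4, 1/4, 0, 1/2, 0, -1/2;
  0, 0, -1/2, 1/4, -1/4, 0, 0, 1/2, -1/2;
  0, 0, 0, 0, 0, 1/4, 1/4, 1/4, 1/4;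
  0, 0, 0, 0, 0, -1/4, -1/4, 1/4, 1/4;
  0, 0, 0, 0, 0, 1/4, -1/4, -1/4, 1/4;
  0, 0, 0, 0, 0, -1/4, 1/4, -1/4, 1/4]

lemma Mmat_one_mul_MmatOneInv : Mmat 1 0 0 0 * MmatOneInv = 1 := by
  ext i j
  fin_cases i <;> fin_cases j <;>
    norm_num [Mmat, Q, vx, vy, MmatOneInv, mul_apply, Fin.sum_univ_succ, one_apply]

/-- For `λ ≠ 0`, the moment matrix associated with the polynomials
`1, X, Y, X²+Y², X²−Y², XY, XY²+α(X²+Y²), YX²+α(X²+Y²), X²Y²`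
shifted by any relative velocity `ũ` is invertible. -/
theorem stmt_5 (lam : ℝ) (hlam : lam ≠ 0) (α : ℝ) (ux uy : ℝ) :
    IsUnit (Mmat lam α ux uy) := by
  rw [isUnit_iff_isUnit_det, Mmat_eq_shiftMatrix_mul, Mmat_zero_eq_diagonal_mul,
    det_mul, det_mul, det_shiftMatrix, det_diagonal, one_mul]
  exact (IsUnit.mk0 _ (Finset.prod_ne_zero_iff.2 fun k _ => pow_ne_zero _ hlam)).mul
    (isUnit_det_of_right_inverse Mmat_one_mul_MmatOneInv)
end

section
/- Let λ ∈ ℝ and let v₀,…,v₈ be the D2Q9 velocities. Let ũ = (ũˣ, ũʸ) ∈ ℝ² and let M be any invertible 9×9 real matrix whose row 0 is the constant row (1,…,1), whose row 1 has entries vⱼˣ − ũˣ, and whose row 2 has entries vⱼʸ − ũʸ. Let D = diag(0, 0, 0, s₃, s₄, s₅, s₆, s₇, s₈) for arbitrary s₃,…,s₈ ∈ ℝ. If f, f^eq ∈ ℝ⁹ satisfy Σⱼ f^eq_j = Σⱼ f_j and Σⱼ vⱼ f^eq_j = Σⱼ vⱼ f_j, then the relaxed distribution f* = f + M⁻¹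 D M (f^eq − f) satisfies Σⱼ f*_j = Σⱼ f_j and Σⱼ vⱼ f*_j = Σⱼ vⱼ f_j; that is, the relaxation phase of the relative velocity scheme conserves the density and the momentum. -/
namespace Matrix

variable {n R : Type*} [Fintype n] [DecidableEq n] [CommRing R] {M : Matrix n n R}

theorem mul_conj_diagonal (hM : IsUnit M) (s : n → R) :
    M * (M⁻¹ * diagonal s * M) = diagonal s * M := by
  rw [mul_assoc, mul_nonsing_inv_cancel_left M _ ((isUnit_iff_isUnit_det M).mp hM)]

theorem row_dotProduct_conj_diagonal_mulVec (hM : IsUnit M) (s : n → R) (x : n → R) (i : n) :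
    M i ⬝ᵥ ((M⁻¹ * diagonal s * M) *ᵥ x) = s i * (M i ⬝ᵥ x) := by
  change (M *ᵥ _) i = _
  rw [mulVec_mulVec, mul_conj_diagonal hM, ← mulVec_mulVec, mulVec_diagonal]
  rfl

theorem dotProduct_conj_diagonal_mulVec_eq_zero (hM : IsUnit M) {s : n → R} {w : n → R}
    (hw : w ∈ Submodule.span R (M '' {i | s i = 0})) (x : n → R) :
    w ⬝ᵥ ((M⁻¹ * diagonal s * M) *ᵥ x) = 0 := by
  induction hw using Submodule.span_induction with
  | mem _ hv =>
    obtain ⟨i, hi, rfl⟩ := hv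
    rw [row_dotProduct_conj_diagonal_mulVec hM, Set.mem_ofPred_eq.mp hi, zero_mul]
  | zero => exact zero_dotProduct _
  | add _ _ _ _ hv hw => rw [add_dotProduct, hv, hw, add_zero]
  | smul c _ _ hv => rw [smul_dotProduct, hv, smul_zero]

end Matrix

open Matrix in
theorem stmt_6_general (lam : ℝ) (ux uy : ℝ) (M : Matrix (Fin 9) (Fin 9) ℝ)
    (hM : IsUnit M)
    (hrow0 : ∀ j, M 0 j = 1)
    (hrow1 : ∀ j, M 1 j = vx lam j - ux)
    (hrow2 : ∀ j, M 2 j = vy lam j - uy)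
    (s : Fin 9 → ℝ) (hs0 : s 0 = 0) (hs1 : s 1 = 0) (hs2 : s 2 = 0)
    (f feq : Fin 9 → ℝ) :
    (∑ j, (f + (M⁻¹ * Matrix.diagonal s * M).mulVec (feq - f)) j = ∑ j, f j) ∧
    (∑ j, vx lam j * (f + (M⁻¹ * Matrix.diagonal s * M).mulVec (feq - f)) j
        = ∑ j, vx lam j * f j) ∧
    (∑ j, vy lam j * (f + (M⁻¹ * Matrix.diagonal s * M).mulVec (feq - f)) j
        = ∑ j, vy lam j * f j) := by
  set V := Submodule.span ℝ (M '' {i | s i = 0})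
  have hrow_mem : ∀ i, s i = 0 → M i ∈ V := fun i hi => Submodule.subset_span ⟨i, hi, rfl⟩
  have hone : M 0 = 1 := funext hrow0
  have hvx : vx lam = M 1 + ux • M 0 := funext fun j => by simp [hrow0, hrow1]
  have hvy : vy lam = M 2 + uy • M 0 := funext fun j => by simp [hrow0, hrow2]
  have hconserved : ∀ w ∈ V, w ⬝ᵥ (f + (M⁻¹ * diagonal s * M) *ᵥ (feq - f)) = w ⬝ᵥ f :=
    fun w hw => by rw [dotProduct_add, dotProduct_conj_diagonal_mulVec_eq_zero hM hw, add_zero]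
  refine ⟨?_, hconserved _ ?_, hconserved _ ?_⟩
  · simpa only [one_dotProduct, hone] using hconserved _ (hrow_mem 0 hs0)
  · rw [hvx]; exact V.add_mem (hrow_mem 1 hs1) (V.smul_mem ux (hrow_mem 0 hs0))
  · rw [hvy]; exact V.add_mem (hrow_mem 2 hs2) (V.smul_mem uy (hrow_mem 0 hs0))

/-- The relaxation phase `f ↦ f + M⁻¹ D M (f^eq − f)` of a relative velocity
scheme, whose moment matrix `M` has rows `1`, `vʲₓ − ũˣ`, `vʲ_y − ũʸ` as its
first three rows and whose relaxation parameters vanish on the first three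
moments, conserves the density and the momentum. -/
theorem stmt_6 (lam : ℝ) (ux uy : ℝ) (M : Matrix (Fin 9) (Fin 9) ℝ)
    (hM : IsUnit M)
    (hrow0 : ∀ j, M 0 j = 1)
    (hrow1 : ∀ j, M 1 j = vx lam j - ux)
    (hrow2 : ∀ j, M 2 j = vy lam j - uy)
    (s : Fin 9 → ℝ) (hs0 : s 0 = 0) (hs1 : s 1 = 0) (hs2 : s 2 = 0)
    (f feq : Fin 9 → ℝ)
    (hρ : ∑ j, feq j = ∑ j, f j)
    (hqx : ∑ j, vx lam j * feq j = ∑ j, vx lam j * f j)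
    (hqy : ∑ j, vy lam j * feq j = ∑ j, vy lam j * f j) :
    (∑ j, (f + (M⁻¹ * Matrix.diagonal s * M).mulVec (feq - f)) j = ∑ j, f j) ∧
    (∑ j, vx lam j * (f + (M⁻¹ * Matrix.diagonal s * M).mulVec (feq - f)) j
        = ∑ j, vx lam j * f j) ∧
    (∑ j, vy lam j * (f + (M⁻¹ * Matrix.diagonal s * M).mulVec (feq - f)) j
        = ∑ j, vy lam j * f j) :=
  stmt_6_general lam ux uy M hM hrow0 hrow1 hrow2 s hs0 hs1 hs2 f feq
end

section
/- Let λ ∈ ℝ and let v₀,…,v₈ be the D2Q9 velocities. Let ũ = (ũˣ, ũʸ) ∈ ℝ², let M be any invertible 9×9 real matrix whose row 0 is the constant row (1,…,1), whose row 1 has entries vⱼˣ − ũˣ, and whose row 2 has entries vⱼʸ − ũʸ, and let s ∈ ℝ and D = diag(0, 0, 0, s, s, s, s, s, s). Then for every g ∈ ℝ⁹ with Σⱼ g_j = 0 and Σⱼ vⱼ g_j = 0 one has M⁻¹ D M g = s g. In particular, for the BGK scheme (a single relaxation parameter on all non-conserved moments) the relaxation phase f* = f + M⁻¹ D M (f^eq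 − f) = f + s(f^eq − f) is independent of the relative velocity ũ and of the choice of moment matrix, whenever f^eq has the same density and momentum as f. -/
/- On vectors with zero density and momentum the moment vector `M g` vanishes in the three
conserved slots, whatever `ũ` is, because the rows `vⱼ - ũ` are combinations of the density and
momentum rows. So `D` acts on `M g` as multiplication by `s`, and conjugating back by `M` gives
`s • g`. -/

open Matrix

namespace Matrix

variable {n R : Type*} [Fintype n] [CommRing R]

theorem mulVec_apply_of_row_eq_one {M : Matrix n n R} {i : n} (h : ∀ j, M i j = 1)
    (g : n → R) : (M *ᵥ g) i = ∑ j, g j := by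
  simp only [mulVec, dotProduct, h, one_mul]

theorem mulVec_apply_of_row_eq_sub {M : Matrix n n R} {i : n} {w : n → R} {u : R}
    (h : ∀ j, M i j = w j - u) (g : n → R) : (M *ᵥ g) i = w ⬝ᵥ g - u * ∑ j, g j := by
  simp only [mulVec, dotProduct, h, sub_mul, Finset.sum_sub_distrib, Finset.mul_sum]

theorem inv_mul_diagonal_mul_mulVec_eq_smul [DecidableEq n] {M : Matrix n n R} (hM : IsUnit M)
    {d : n → R} {s : R} {g : n → R} (h : ∀ i, d i = s ∨ (M *ᵥ g) i = 0) :
    (M⁻¹ * diagonal d * M) *ᵥ g = s • g := by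
  have hD : diagonal d *ᵥ (M *ᵥ g) = s • (M *ᵥ g) := by
    funext i
    rcases h i with hi | hi <;> simp [mulVec_diagonal, hi]
  rw [← mulVec_mulVec, ← mulVec_mulVec, hD, mulVec_smul, mulVec_mulVec,
    nonsing_inv_mul M ((isUnit_iff_isUnit_det M).mp hM), one_mulVec]

end Matrix

/-- For the BGK scheme (a single relaxation parameter `s` on all non-conserved
moments, `D = diag(0,0,0,s,…,s)`), the operator `M⁻¹ D M` acts as `s • id` on
every vector with zero density and momentum; consequently the relaxation phase
`f* = f + M⁻¹ D M (f^eq − f) = f + s (f^eq − f)` is independent of the relative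
velocity `ũ` and of the choice of moment matrix. -/
theorem stmt_7 (lam : ℝ) (ux uy : ℝ) (M : Matrix (Fin 9) (Fin 9) ℝ)
    (hM : IsUnit M)
    (hrow0 : ∀ j, M 0 j = 1)
    (hrow1 : ∀ j, M 1 j = vx lam j - ux)
    (hrow2 : ∀ j, M 2 j = vy lam j - uy)
    (s : ℝ) :
    (∀ g : Fin 9 → ℝ, (∑ j, g j = 0) → (∑ j, vx lam j * g j = 0) →
        (∑ j, vy lam j * g j = 0) →
        (M⁻¹ * Matrix.diagonal (![0, 0, 0, s, s, s, s, s, s]) * M).mulVec g = s • g) ∧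
    (∀ f feq : Fin 9 → ℝ,
        (∑ j, feq j = ∑ j, f j) →
        (∑ j, vx lam j * feq j = ∑ j, vx lam j * f j) →
        (∑ j, vy lam j * feq j = ∑ j, vy lam j * f j) →
        f + (M⁻¹ * Matrix.diagonal (![0, 0, 0, s, s, s, s, s, s]) * M).mulVec (feq - f)
          = f + s • (feq - f)) := by
  have relax_eq_smul : ∀ g : Fin 9 → ℝ, (∑ j, g j = 0) → (∑ j, vx lam j * g j = 0) →
      (∑ j, vy lam j * g j = 0) →
      (M⁻¹ * Matrix.diagonal (![0, 0, 0, s, s, s, s, s, s]) * M).mulVec g = s • g := by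
    intro g h0 h1 h2
    have hdensity := mulVec_apply_of_row_eq_one hrow0 g
    have hmomentum_x := mulVec_apply_of_row_eq_sub hrow1 g
    have hmomentum_y := mulVec_apply_of_row_eq_sub hrow2 g
    simp only [dotProduct, h0, h1, h2, mul_zero, sub_zero] at hdensity hmomentum_x hmomentum_y
    refine inv_mul_diagonal_mul_mulVec_eq_smul hM fun i => ?_
    fin_cases i <;> simp [hdensity, hmomentum_x, hmomentum_y]
  refine ⟨relax_eq_smul, fun f feq hd hx hy => ?_⟩
  rw [relax_eq_smul (feq - f)] <;>
    simp only [Pi.sub_apply, mul_sub, Finset.sum_sub_distrib, hd, hx, hy, sub_self]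
end

section
/- Let λ ∈ ℝ with λ ≠ 0 and let v₀,…,v₈ be the D2Q9 velocities. For α ∈ ℝ and ũ ∈ ℝ² let M_{ũ,α} be the 9×9 matrix with entries (M_{ũ,α})_{kj} = Q_k(vⱼ − ũ), where (Q₀,…,Q₈) are the polynomials 1, X, Y, X²+Y², X²−Y², XY, XY²+α(X²+Y²), YX²+α(X²+Y²), X²Y². Let D = diag(0, 0, 0, s₃, s₄, s₅, s₆, s₇, s₈) with s₃ = s₆ = s₇. Then for all α, α′ ∈ ℝ and every ũ ∈ ℝ² one has the exact matrix identity M_{ũ,α}⁻¹ D M_{ũ,α} = M_{ũ,α′}⁻¹ D M_{ũ,α′}. In particular, the relaxation phase of the relative velocity scheme with these moments and a TRT₁ choice of relaxation parameters is independent of α, whatever the relative velocity ũ. -/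
/-!
Changing `α` adds `α` times the moment of `X² + Y²` to each of the two third-order moments, so
`M_α = (1 + α N) M_0` with `N² = 0`. Because `s₃ = s₆ = s₇`, the unipotent matrix `1 + α N`
commutes with `D`, and it cancels from `M_α⁻¹ D M_α`.
-/

namespace Matrix

variable {n R : Type*} [Fintype n] [DecidableEq n]

theorem commute_single_diagonal [CommSemiring R] {i j : n} (c : R) {d : n → R}
    (h : d i = d j) : Commute (single i j c) (diagonal d) := by
  ext a b
  by_cases hab : i = a ∧ j = b
  · obtain ⟨rfl, rfl⟩ := hab
    simp [mul_diagonal, h, mul_comm]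
  · simp [mul_diagonal, diagonal_mul, single_apply_of_ne _ _ _ _ _ hab]

theorem inv_mul_mul_of_commute [CommRing R] {E D M : Matrix n n R} (hE : IsUnit E.det)
    (hED : Commute E D) : (E * M)⁻¹ * D * (E * M) = M⁻¹ * D * M := by
  rw [mul_inv_rev, Matrix.mul_assoc, ← Matrix.mul_assoc D, ← hED.eq, Matrix.mul_assoc M⁻¹,
    ← Matrix.mul_assoc E⁻¹, ← Matrix.mul_assoc E⁻¹, nonsing_inv_mul E hE, Matrix.one_mul,
    Matrix.mul_assoc]

end Matrix

open Matrix

/-- The matrix `N` adding row 3 (the moment `X² + Y²`) to rows 6 and 7. -/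
def thirdOrderShift : Matrix (Fin 9) (Fin 9) ℝ := single 6 3 1 + single 7 3 1

theorem thirdOrderShift_mul_self : thirdOrderShift * thirdOrderShift = 0 := by
  simp [thirdOrderShift, Matrix.add_mul, Matrix.mul_add]

theorem isUnit_det_one_add_smul_thirdOrderShift (α : ℝ) :
    IsUnit (1 + α • thirdOrderShift).det := by
  rw [← isUnit_iff_isUnit_det]
  have hN : IsNilpotent thirdOrderShift := ⟨2, by rw [pow_two, thirdOrderShift_mul_self]⟩
  exact (hN.smul α).isUnit_one_add

theorem commute_one_add_smul_thirdOrderShift_diagonal (α : ℝ) {s : Fin 9 → ℝ}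
    (hs36 : s 3 = s 6) (hs37 : s 3 = s 7) :
    Commute (1 + α • thirdOrderShift) (diagonal s) := by
  have hN : Commute thirdOrderShift (diagonal s) :=
    (commute_single_diagonal 1 hs36.symm).add_left (commute_single_diagonal 1 hs37.symm)
  exact (Commute.one_left _).add_left (hN.smul_left α)

theorem Mmat_eq_mul_Mmat_zero (lam α ux uy : ℝ) :
    Mmat lam α ux uy = (1 + α • thirdOrderShift) * Mmat lam 0 ux uy := by
  ext k j
  fin_cases k <;> simp [thirdOrderShift, Matrix.add_mul, Mmat, Q]

theorem stmt_9_general (lam : ℝ)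
    (s : Fin 9 → ℝ)
    (hs36 : s 3 = s 6) (hs37 : s 3 = s 7)
    (α α' : ℝ) (ux uy : ℝ) :
    (Mmat lam α ux uy)⁻¹ * Matrix.diagonal s * Mmat lam α ux uy
      = (Mmat lam α' ux uy)⁻¹ * Matrix.diagonal s * Mmat lam α' ux uy := by
  rw [Mmat_eq_mul_Mmat_zero lam α, Mmat_eq_mul_Mmat_zero lam α',
    inv_mul_mul_of_commute (isUnit_det_one_add_smul_thirdOrderShift α)
      (commute_one_add_smul_thirdOrderShift_diagonal α hs36 hs37),
    inv_mul_mul_of_commute (isUnit_det_one_add_smul_thirdOrderShift α')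
      (commute_one_add_smul_thirdOrderShift_diagonal α' hs36 hs37)]

/-- Provided the moment of `X²+Y²` and the two third-order moments share the
same relaxation parameter (`s 3 = s 6 = s 7`, as for the TRT₁ choice), the
relaxation operator `M⁻¹ D M` of the relative velocity scheme with moments
`1, X, Y, X²+Y², X²−Y², XY, XY²+α(X²+Y²), YX²+α(X²+Y²), X²Y²` is independent
of `α`, whatever the relative velocity `ũ`. -/
theorem stmt_9 (lam : ℝ) (hlam : lam ≠ 0)
    (s : Fin 9 → ℝ) (hs0 : s 0 = 0) (hs1 : s 1 = 0) (hs2 : s 2 = 0)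
    (hs36 : s 3 = s 6) (hs37 : s 3 = s 7)
    (α α' : ℝ) (ux uy : ℝ) :
    (Mmat lam α ux uy)⁻¹ * Matrix.diagonal s * Mmat lam α ux uy
      = (Mmat lam α' ux uy)⁻¹ * Matrix.diagonal s * Mmat lam α' ux uy :=
  stmt_9_general lam s hs36 hs37 α α' ux uy
end
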